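/- For every integer n ≥ 3 with n ≠ 4, the signed Roman domination number of the wheel Wₙ = K₁ ∨ Cₙ equals 1. -/

import Mathlib

open Finset SimpleGraph
open scoped Classical

/-- The sum of `f` over the closed neighborhood of `v` in `G`. -/
noncomputable def closedNbrSum {V : Type*} [Fintype V] (G : SimpleGraph V)
    (f : V → ℤ) (v : V) : ℤ :=
  ∑ u ∈ Finset.univ.filter (fun u => u = v ∨ G.Adj v u), f u

/-- `f` is a signed Roman dominating function on `G`. -/
def IsSRDF {V : Type*} [Fintype V] (G : SimpleGraph V) (f : V → ℤ) : Prop :=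
  (∀ v, f v = -1 ∨ f v = 1 ∨ f v = 2) ∧
  (∀ v, 1 ≤ closedNbrSum G f v) ∧
  (∀ v, f v = -1 → ∃ u, G.Adj v u ∧ f u = 2)

/-- The signed Roman domination number of `G`. -/
noncomputable def gammaSR {V : Type*} [Fintype V] (G : SimpleGraph V) : ℤ :=
  sInf {w : ℤ | ∃ f, IsSRDF G f ∧ w = ∑ v, f v}

/-- The join of two graphs. -/
def graphJoin {V W : Type*} (G : SimpleGraph V) (H : SimpleGraph W) :
    SimpleGraph (V ⊕ W) where
  Adj x y :=
    match x, y with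
    | .inl a, .inl b => G.Adj a b
    | .inr a, .inr b => H.Adj a b
    | _, _ => True
  symm := by
    constructor
    rintro (a | a) (b | b) h <;> simp_all <;> exact h.symm
  loopless := by
    constructor
    rintro (a | a) h <;> simp_all

/-! The hub of the wheel is adjacent to every other vertex, so the weight of a signed Roman
dominating function is its closed-neighbourhood sum at the hub, hence at least 1. Conversely,
label the hub 2 and the rim by a `{-1, 1, 2}`-labelling of total weight `-1` whose
closed-neighbourhood sums along the cycle are at least `-1`: `(-1, 1, -1, 1, …, -1)` for odd `n`
and `(2, -1, -1, 1, -1, -1, 1, -1, …, 1, -1)` for even `n ≥ 6`. Every `-1` is then adjacent to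
the hub labelled 2, and every rim vertex has closed-neighbourhood sum at least `2 - 1`. -/

theorem closedNbrSum_eq_add_sum_neighborFinset {V : Type*} [Fintype V] (G : SimpleGraph V)
    (f : V → ℤ) (v : V) [Fintype (G.neighborSet v)] :
    closedNbrSum G f v = f v + ∑ u ∈ G.neighborFinset v, f u := by
  have hnbhd : univ.filter (fun u => u = v ∨ G.Adj v u) = insert v (G.neighborFinset v) := by
    ext u; simp
  rw [closedNbrSum, hnbhd, sum_insert (by simp)]

theorem closedNbrSum_eq_sum_of_forall_adj {V : Type*} [Fintype V] {G : SimpleGraph V} {v : V}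
    (hv : ∀ u, u ≠ v → G.Adj v u) (f : V → ℤ) : closedNbrSum G f v = ∑ u, f u := by
  rw [closedNbrSum, filter_true_of_mem]
  intro u _
  exact (eq_or_ne u v).imp_right (hv u)

theorem IsSRDF.one_le_sum {V : Type*} [Fintype V] {G : SimpleGraph V} {f : V → ℤ}
    (hf : IsSRDF G f) {v : V} (hv : ∀ u, u ≠ v → G.Adj v u) : 1 ≤ ∑ u, f u :=
  closedNbrSum_eq_sum_of_forall_adj hv f ▸ hf.2.1 v

theorem gammaSR_eq_of_isSRDF {V : Type*} [Fintype V] {G : SimpleGraph V} {f : V → ℤ}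
    (hf : IsSRDF G f) (hmin : ∀ g, IsSRDF G g → ∑ v, f v ≤ ∑ v, g v) :
    gammaSR G = ∑ v, f v := by
  refine le_antisymm (csInf_le ⟨∑ v, f v, ?_⟩ ⟨f, hf, rfl⟩) (le_csInf ⟨_, f, hf, rfl⟩ ?_)
    <;> rintro _ ⟨g, hg, rfl⟩ <;> exact hmin g hg

theorem graphJoin_adj_inl_of_subsingleton {V W : Type*} [Subsingleton V] (G : SimpleGraph V)
    (H : SimpleGraph W) (a : V) (u : V ⊕ W) (hu : u ≠ .inl a) :
    (graphJoin G H).Adj (.inl a) u := by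
  rcases u with b | w
  · exact absurd (congrArg Sum.inl (Subsingleton.elim b a)) hu
  · trivial

theorem closedNbrSum_graphJoin_inr {V W : Type*} [Fintype V] [Fintype W] (G : SimpleGraph V)
    (H : SimpleGraph W) (f : V ⊕ W → ℤ) (w : W) :
    closedNbrSum (graphJoin G H) f (.inr w) =
      ∑ a, f (.inl a) + closedNbrSum H (f ∘ .inr) w := by
  rw [closedNbrSum, closedNbrSum, sum_filter, sum_filter, Fintype.sum_sum_type]
  congr 1
  · exact sum_congr rfl fun a _ => if_pos (.inr trivial)
  · refine sum_congr rfl fun b _ => ?_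
    simp [graphJoin]

def IsRimLabeling {W : Type*} [Fintype W] (H : SimpleGraph W) (g : W → ℤ) : Prop :=
  (∀ w, g w = -1 ∨ g w = 1 ∨ g w = 2) ∧ ∑ w, g w = -1 ∧ ∀ w, -1 ≤ closedNbrSum H g w

theorem IsRimLabeling.isSRDF_graphJoin {W : Type*} [Fintype W] {H : SimpleGraph W} {g : W → ℤ}
    (hg : IsRimLabeling H g) :
    IsSRDF (graphJoin (⊥ : SimpleGraph (Fin 1)) H) (Sum.elim (fun _ => 2) g) := by
  obtain ⟨hvals, hsum, hnbhd⟩ := hg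
  refine ⟨?_, ?_, ?_⟩
  · rintro (_ | w)
    · exact .inr (.inr rfl)
    · exact hvals w
  · rintro (a | w)
    · rw [closedNbrSum_eq_sum_of_forall_adj (graphJoin_adj_inl_of_subsingleton _ H a),
        Fintype.sum_sum_type]
      simp [hsum]
    · rw [closedNbrSum_graphJoin_inr, Sum.elim_comp_inr, Fin.sum_univ_one, Sum.elim_inl]
      linarith [hnbhd w]
  · rintro (_ | w) hw
    · simp at hw
    · exact ⟨.inl 0, trivial, rfl⟩

theorem IsRimLabeling.gammaSR_graphJoin {W : Type*} [Fintype W] {H : SimpleGraph W}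
    {g : W → ℤ} (hg : IsRimLabeling H g) :
    gammaSR (graphJoin (⊥ : SimpleGraph (Fin 1)) H) = 1 := by
  have hhub := graphJoin_adj_inl_of_subsingleton (⊥ : SimpleGraph (Fin 1)) H 0
  have hweight : ∑ v : Fin 1 ⊕ W, Sum.elim (fun _ => (2 : ℤ)) g v = 1 := by
    simp [Fintype.sum_sum_type, hg.2.1]
  rw [← hweight]
  exact gammaSR_eq_of_isSRDF hg.isSRDF_graphJoin fun f hf => hweight ▸ hf.one_le_sum hhub

theorem closedNbrSum_cycleGraph (m : ℕ) (g : Fin (m + 3) → ℤ) (i : Fin (m + 3)) :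
    closedNbrSum (cycleGraph (m + 3)) g i = g (i - 1) + g i + g (i + 1) := by
  have hne : i - 1 ≠ i + 1 := by
    rw [ne_eq, sub_eq_iff_eq_add, add_assoc, left_eq_add, Fin.ext_iff]
    simp [Fin.val_add, Nat.mod_eq_of_lt]
  have hnbrs : (cycleGraph (m + 3)).neighborFinset i = {i - 1, i + 1} :=
    cycleGraph_neighborFinset
  rw [closedNbrSum_eq_add_sum_neighborFinset, hnbrs, sum_pair hne]
  ring

theorem isRimLabeling_cycleGraph_of_nat (m : ℕ) (g : ℕ → ℤ)
    (hvals : ∀ j, g j = -1 ∨ g j = 1 ∨ g j = 2) (hsum : ∑ j ∈ range (m + 3), g j = -1)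
    (hnbhd : ∀ j < m + 3,
      -1 ≤ g (if j = 0 then m + 2 else j - 1) + g j + g (if j = m + 2 then 0 else j + 1)) :
    IsRimLabeling (cycleGraph (m + 3)) (fun i => g i) := by
  refine ⟨fun i => hvals i, by rw [Fin.sum_univ_eq_sum_range g, hsum], fun i => ?_⟩
  rw [closedNbrSum_cycleGraph, Fin.coe_sub_one, Fin.val_add_one]
  simpa only [Fin.ext_iff, Fin.val_zero, Fin.val_last] using hnbhd i i.isLt

def alternatingLabel (j : ℕ) : ℤ := if j % 2 = 0 then -1 else 1

theorem sum_range_alternatingLabel (k : ℕ) :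
    ∑ j ∈ range (2 * k + 3), alternatingLabel j = -1 := by
  induction k with
  | zero => simp [sum_range_succ, alternatingLabel]
  | succ k ih =>
    rw [show 2 * (k + 1) + 3 = 2 * k + 3 + 1 + 1 by ring, sum_range_succ, sum_range_succ, ih]
    simp [alternatingLabel, Nat.add_mod]

theorem isRimLabeling_cycleGraph_alternatingLabel (k : ℕ) :
    IsRimLabeling (cycleGraph (2 * k + 3)) (fun i => alternatingLabel i) := by
  refine isRimLabeling_cycleGraph_of_nat (2 * k) _ (fun j => ?_) (sum_range_alternatingLabel k)
    fun j hj => ?_ <;> unfold alternatingLabel <;> split_ifs <;> omega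

def evenCycleLabel (j : ℕ) : ℤ :=
  if j = 0 then 2 else if j = 3 ∨ 6 ≤ j ∧ j % 2 = 0 then 1 else -1

theorem sum_range_evenCycleLabel (k : ℕ) :
    ∑ j ∈ range (2 * k + 6), evenCycleLabel j = -1 := by
  induction k with
  | zero => simp [sum_range_succ, evenCycleLabel]
  | succ k ih =>
    rw [show 2 * (k + 1) + 6 = 2 * k + 6 + 1 + 1 by ring, sum_range_succ, sum_range_succ, ih]
    simp [evenCycleLabel, Nat.add_mod]

theorem isRimLabeling_cycleGraph_evenCycleLabel (k : ℕ) :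
    IsRimLabeling (cycleGraph (2 * k + 3 + 3)) (fun i => evenCycleLabel i) := by
  refine isRimLabeling_cycleGraph_of_nat (2 * k + 3) _ (fun j => ?_) (sum_range_evenCycleLabel k)
    fun j hj => ?_ <;> unfold evenCycleLabel <;> split_ifs <;> omega

theorem exists_isRimLabeling_cycleGraph {n : ℕ} (hn : 3 ≤ n) (hn4 : n ≠ 4) :
    ∃ g, IsRimLabeling (cycleGraph n) g := by
  rcases Nat.even_or_odd' n with ⟨k, rfl | rfl⟩
  · obtain ⟨k, rfl⟩ : ∃ j, k = j + 3 := ⟨k - 3, by omega⟩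
    rw [show 2 * (k + 3) = 2 * k + 3 + 3 by ring]
    exact ⟨_, isRimLabeling_cycleGraph_evenCycleLabel k⟩
  · obtain ⟨k, rfl⟩ : ∃ j, k = j + 1 := ⟨k - 1, by omega⟩
    exact ⟨_, isRimLabeling_cycleGraph_alternatingLabel k⟩

theorem stmt11 (n : ℕ) (hn : 3 ≤ n) (hn4 : n ≠ 4) :
    gammaSR (graphJoin (⊥ : SimpleGraph (Fin 1)) (cycleGraph n)) = 1 := by
  obtain ⟨g, hg⟩ := exists_isRimLabeling_cycleGraph hn hn4
  exact hg.gammaSR_graphJoin
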